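/- arXiv:2502.06979 — 7 statements merged into one kernel-verified Lean document; each statement's English description precedes it below -/
import Mathlib

section
/- For every n ≥ 3, the graph G_n^5 on vertex set {a_1,...,a_n, b_1,...,b_n}, which is the complete graph on 2n vertices minus the 2n edges of the cycle a_1 b_1 a_2 b_2 ... a_n b_n a_1 (i.e., the missing edges are exactly {a_i,b_i} for all i, {a_{i+1},b_i} for 1 ≤ i ≤ n-1, and {a_1,b_n}), admits a semi-transitive orientation. -/
/-- `D` is an orientation of `G`: directed edges lie on edges of `G`, and each
edge of `G` gets exactly one direction. -/
def IsOrientation {V : Type*} (G : SimpleGraph V) (D : V → V → Prop) : Prop :=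
  (∀ u v, D u v → G.Adj u v) ∧ ∀ u v, G.Adj u v → (D u v ↔ ¬ D v u)

/-- `D` is semi-transitive: acyclic, and for every directed path
`p 0 → p 1 → ⋯ → p k` such that `p 0 → p k` is a directed edge, all the
edges `p i → p j` for `i < j ≤ k` are present. -/
def IsSemiTransitive {V : Type*} (D : V → V → Prop) : Prop :=
  (∀ v, ¬ Relation.TransGen D v v) ∧
    ∀ (k : ℕ) (p : ℕ → V), (∀ i < k, D (p i) (p (i + 1))) → D (p 0) (p k) →
      ∀ i j, i < j → j ≤ k → D (p i) (p j)

/-- The graph `G_n^5` on vertices `a_1,…,a_n` (`Sum.inl`, 0-based) and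
`b_1,…,b_n` (`Sum.inr`, 0-based): the complete graph on `2n` vertices minus
the cycle of missing edges `{a_i,b_i}` (all `i`), `{a_{i+1},b_i}`
(`1 ≤ i ≤ n-1`) and `{a_1,b_n}`. -/
def G5 (n : ℕ) : SimpleGraph (Fin n ⊕ Fin n) :=
  SimpleGraph.fromRel (fun u v =>
    match u, v with
    | Sum.inl i, Sum.inr j =>
        ¬((i : ℕ) = (j : ℕ) ∨ (i : ℕ) = (j : ℕ) + 1 ∨ ((i : ℕ) = 0 ∧ (j : ℕ) = n - 1))
    | Sum.inl _, Sum.inl _ => True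
    | Sum.inr _, Sum.inr _ => True
    | Sum.inr _, Sum.inl _ => False)


def rk {n : ℕ} : Fin n ⊕ Fin n → ℕ
  | Sum.inl i => 2 * i
  | Sum.inr i => 2 * i + 1

lemma rk_lt {n : ℕ} (v : Fin n ⊕ Fin n) : rk v < 2 * n := by
  cases v with
  | inl i => have := i.isLt; simp only [rk]; omega
  | inr i => have := i.isLt; simp only [rk]; omega

lemma adj_iff {n : ℕ} (u v : Fin n ⊕ Fin n) :
    (G5 n).Adj u v ↔ (rk u + 2 ≤ rk v ∨ rk v + 2 ≤ rk u) ∧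
      ¬((rk u = 0 ∧ rk v = 2 * n - 1) ∨ (rk v = 0 ∧ rk u = 2 * n - 1)) := by
  cases u with
  | inl i =>
    cases v with
    | inl j =>
      have hi := i.isLt; have hj := j.isLt
      simp only [G5, SimpleGraph.fromRel_adj, rk, ne_eq, Sum.inl.injEq, Fin.ext_iff,
        or_self, and_true]
      omega
    | inr j =>
      have hi := i.isLt; have hj := j.isLt
      simp only [G5, SimpleGraph.fromRel_adj, rk, ne_eq, or_false, reduceCtorEq,
        not_false_eq_true, true_and]
      omega
  | inr i =>
    cases v with
    | inl j =>
      have hi := i.isLt; have hj := j.isLt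
      simp only [G5, SimpleGraph.fromRel_adj, rk, ne_eq, false_or, reduceCtorEq,
        not_false_eq_true, true_and]
      omega
    | inr j =>
      have hi := i.isLt; have hj := j.isLt
      simp only [G5, SimpleGraph.fromRel_adj, rk, ne_eq, Sum.inr.injEq, Fin.ext_iff,
        or_self, and_true]
      omega


/-- For every `n ≥ 3`, the graph `G_n^5` admits a semi-transitive orientation. -/
theorem stmt4 :
    ∀ n : ℕ, 3 ≤ n → ∃ D, IsOrientation (G5 n) D ∧ IsSemiTransitive D := by
  intro n hn
  refine ⟨fun u v => (G5 n).Adj u v ∧ rk u < rk v, ⟨fun u v h => h.1, ?_⟩, ?_, ?_⟩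
  · intro u v h
    have hd := (adj_iff u v).1 h
    constructor
    · rintro ⟨_, hlt⟩ ⟨_, hlt'⟩; omega
    · intro hnd
      refine ⟨h, ?_⟩
      rcases Nat.lt_or_ge (rk u) (rk v) with h1 | h1
      · exact h1
      · exact absurd ⟨h.symm, by omega⟩ hnd
  · intro v h
    have key : ∀ a b : Fin n ⊕ Fin n,
        Relation.TransGen (fun u v => (G5 n).Adj u v ∧ rk u < rk v) a b → rk a < rk b := by
      intro a b h
      induction h with
      | single h => exact h.2
      | tail _ h ih => exact ih.trans h.2
    exact absurd (key v v h) (lt_irrefl _)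
  · intro k p hp h0k i j hij hjk
    have step : ∀ m, m < k → rk (p m) + 2 ≤ rk (p (m + 1)) := by
      intro m hm
      have h := hp m hm
      have hd := (adj_iff _ _).1 h.1
      have := h.2
      omega
    have gap : ∀ d i, i + d ≤ k → rk (p i) + 2 * d ≤ rk (p (i + d)) := by
      intro d
      induction d with
      | zero => intro i _; simp
      | succ d ih =>
        intro i h
        have h1 := ih i (by omega)
        have h2 := step (i + d) (by omega)
        rw [show i + (d + 1) = (i + d) + 1 from by omega]
        omega
    have hgap : rk (p i) + 2 * (j - i) ≤ rk (p j) := by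
      have := gap (j - i) i (by omega)
      rwa [show i + (j - i) = j from by omega] at this
    refine ⟨(adj_iff _ _).2 ⟨Or.inl (by omega), ?_⟩, by omega⟩
    rintro (⟨h1, h2⟩ | ⟨h1, h2⟩)
    · have g1 := gap i 0 (by omega)
      have g2 := gap (k - j) j (by omega)
      rw [show j + (k - j) = k from by omega] at g2
      rw [Nat.zero_add] at g1
      have hk := rk_lt (p k)
      have hj0 : j = k := by omega
      have h0 : rk (p 0) = 0 := by omega
      have hd := (adj_iff _ _).1 h0k.1
      subst hj0
      omega
    · omega
end

section
/- For every n ≥ 3, the graph G_n^6 on vertex set {a_1,...,a_n, b_1,...,b_n, c_0}, which is the complete graph on 2n+1 vertices minus the 2n+1 edges {a_i,b_i} for all i, {a_{i+1},b_i} for 1 ≤ i ≤ n-1, {a_1,c_0}, and {b_n,c_0}, admits a semi-transitive orientation. -/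
/-- The graph `G_n^6` on vertices `a_1,…,a_n` (`Sum.inl`, 0-based),
`b_1,…,b_n` (`Sum.inr ∘ Sum.inl`, 0-based) and `c_0` (`Sum.inr (Sum.inr ())`):
the complete graph on `2n+1` vertices minus the `2n+1` missing edges
`{a_i,b_i}` (all `i`), `{a_{i+1},b_i}` (`1 ≤ i ≤ n-1`), `{a_1,c_0}` and
`{b_n,c_0}`. -/
def G6 (n : ℕ) : SimpleGraph (Fin n ⊕ Fin n ⊕ Unit) :=
  SimpleGraph.fromRel (fun u v =>
    match u, v with
    | Sum.inl i, Sum.inr (Sum.inl j) => ¬((i : ℕ) = (j : ℕ) ∨ (i : ℕ) = (j : ℕ) + 1)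
    | Sum.inl i, Sum.inr (Sum.inr _) => ¬((i : ℕ) = 0)
    | Sum.inr (Sum.inl j), Sum.inr (Sum.inr _) => ¬((j : ℕ) = n - 1)
    | Sum.inl _, Sum.inl _ => True
    | Sum.inr (Sum.inl _), Sum.inr (Sum.inl _) => True
    | _, _ => False)

/-- The rank of a vertex in the ordering `a_1, b_1, a_2, b_2, …, a_n, b_n, c_0`. -/
def rk6 (n : ℕ) : Fin n ⊕ Fin n ⊕ Unit → ℕ
  | Sum.inl i => 2 * (i : ℕ)
  | Sum.inr (Sum.inl j) => 2 * (j : ℕ) + 1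
  | Sum.inr (Sum.inr _) => 2 * n

/-- The orientation: `u → v` iff `2 ≤ rk v - rk u ≤ 2n - 1`. -/
def D6 (n : ℕ) (u v : Fin n ⊕ Fin n ⊕ Unit) : Prop :=
  rk6 n u + 2 ≤ rk6 n v ∧ rk6 n v + 1 ≤ rk6 n u + 2 * n

lemma G6_adj_iff {n : ℕ} (hn : 3 ≤ n) (u v : Fin n ⊕ Fin n ⊕ Unit) :
    (G6 n).Adj u v ↔ (D6 n u v ∨ D6 n v u) := by
  have hne : ∀ w w' : Fin n ⊕ Fin n ⊕ Unit, D6 n w w' → w ≠ w' := by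
    rintro w w' ⟨h1, _⟩ rfl; omega
  rw [G6, SimpleGraph.fromRel_adj]
  constructor
  · rintro ⟨hne', h⟩
    rcases u with i | j | u
    · rcases v with i' | j' | v'
      · have hi := i.isLt; have hi' := i'.isLt
        have hd : (i : ℕ) ≠ (i' : ℕ) := fun hh => hne' (congrArg Sum.inl (Fin.ext hh))
        simp only [D6, rk6]; omega
      · have hi := i.isLt; have hj' := j'.isLt
        simp only [D6, rk6]
        rcases h with h | h <;> [skip; simp only at h] <;>
          simp only [not_or] at h <;> omega
      · have hi := i.isLt
        simp only [D6, rk6]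
        rcases h with h | h <;> [skip; simp only at h] <;> omega
    · rcases v with i' | j' | v'
      · have hj := j.isLt; have hi' := i'.isLt
        simp only [D6, rk6]
        rcases h with h | h <;> [simp only at h; skip] <;>
          simp only [not_or] at h <;> omega
      · have hj := j.isLt; have hj' := j'.isLt
        have hd : (j : ℕ) ≠ (j' : ℕ) := fun hh =>
          hne' (congrArg (Sum.inr ∘ Sum.inl) (Fin.ext hh))
        simp only [D6, rk6]; omega
      · have hj := j.isLt
        simp only [D6, rk6]
        rcases h with h | h <;> [skip; simp only at h] <;> omega
    · rcases v with i' | j' | v'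
      · have hi' := i'.isLt
        simp only [D6, rk6]
        rcases h with h | h <;> [simp only at h; skip] <;> omega
      · have hj' := j'.isLt
        simp only [D6, rk6]
        rcases h with h | h <;> [simp only at h; skip] <;> omega
      · rcases h with h | h <;> simp only at h
  · intro h
    have hne' : u ≠ v := by
      rcases h with h | h
      · exact hne u v h
      · exact (hne v u h).symm
    refine ⟨hne', ?_⟩
    rcases u with i | j | u
    · rcases v with i' | j' | v'
      · exact Or.inl trivial
      · have hi := i.isLt; have hj' := j'.isLt
        simp only [D6, rk6] at h
        left; simp only [not_or]; omega
      · have hi := i.isLt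
        simp only [D6, rk6] at h
        left; omega
    · rcases v with i' | j' | v'
      · have hj := j.isLt; have hi' := i'.isLt
        simp only [D6, rk6] at h
        right; simp only [not_or]; omega
      · exact Or.inl trivial
      · have hj := j.isLt
        simp only [D6, rk6] at h
        left; omega
    · rcases v with i' | j' | v'
      · have hi' := i'.isLt
        simp only [D6, rk6] at h
        right; omega
      · have hj' := j'.isLt
        simp only [D6, rk6] at h
        right; omega
      · simp only [D6, rk6] at h; omega

/-- For every `n ≥ 3`, the graph `G_n^6` admits a semi-transitive orientation. -/
theorem stmt6 :
    ∀ n : ℕ, 3 ≤ n → ∃ D, IsOrientation (G6 n) D ∧ IsSemiTransitive D := by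
  intro n hn
  refine ⟨D6 n, ⟨?_, ?_⟩, ?_, ?_⟩
  · intro u v h
    exact (G6_adj_iff hn u v).mpr (Or.inl h)
  · intro u v hadj
    have h := (G6_adj_iff hn u v).mp hadj
    constructor
    · rintro ⟨h1, _⟩ ⟨h2, _⟩; omega
    · intro hnvu
      rcases h with h | h
      · exact h
      · exact absurd h hnvu
  · intro v hv
    have key : ∀ u w, Relation.TransGen (D6 n) u w → rk6 n u < rk6 n w := by
      intro u w h
      induction h with
      | single h => obtain ⟨h1, _⟩ := h; omega
      | tail _ h ih => exact lt_of_lt_of_le ih (by obtain ⟨h1, _⟩ := h; omega)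
    exact absurd (key v v hv) (lt_irrefl _)
  · intro k p hp h0k i j hij hjk
    have mono : ∀ d a, a + d ≤ k → rk6 n (p a) + 2 * d ≤ rk6 n (p (a + d)) := by
      intro d
      induction d with
      | zero => intro a _; simp
      | succ d ih =>
        intro a hak
        have h1 := ih a (by omega)
        have h2 := hp (a + d) (by omega)
        obtain ⟨h2, _⟩ := h2
        have : a + (d + 1) = (a + d) + 1 := by omega
        rw [this]
        omega
    obtain ⟨hlo, hhi⟩ := h0k
    have h1 : rk6 n (p i) + 2 * (j - i) ≤ rk6 n (p j) := by
      have := mono (j - i) i (by omega)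
      rwa [Nat.add_sub_cancel' (le_of_lt hij)] at this
    have h2 : rk6 n (p 0) + 2 * i ≤ rk6 n (p i) := by
      have := mono i 0 (by omega); simpa using this
    have h3 : rk6 n (p j) + 2 * (k - j) ≤ rk6 n (p k) := by
      have := mono (k - j) j (by omega)
      rwa [Nat.add_sub_cancel' hjk] at this
    constructor <;> omega
end

section
/- Every 3-colorable graph admits a semi-transitive orientation. -/
/-- Every 3-colorable graph admits a semi-transitive orientation. -/
theorem stmt7 {V : Type*} (G : SimpleGraph V) (h : G.Colorable 3) :
    ∃ D, IsOrientation G D ∧ IsSemiTransitive D := by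
  obtain ⟨c⟩ := h
  refine ⟨fun u v => G.Adj u v ∧ (c u : ℕ) < c v, ⟨fun u v hd => hd.1, ?_⟩, ?_, ?_⟩
  · intro u v hadj
    have hne : (c u : ℕ) ≠ c v := fun he => c.valid hadj (Fin.ext he)
    constructor
    · rintro ⟨-, hlt⟩ ⟨-, hlt'⟩; omega
    · intro hnd
      refine ⟨hadj, ?_⟩
      rcases lt_or_gt_of_ne hne with h1 | h1
      · exact h1
      · exact absurd ⟨hadj.symm, h1⟩ hnd
  · intro v hv
    have key : ∀ a b : V, Relation.TransGen (fun u v => G.Adj u v ∧ (c u : ℕ) < c v) a b →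
        (c a : ℕ) < c b := by
      intro a b hab
      induction hab with
      | single h => exact h.2
      | tail _ h ih => exact ih.trans h.2
    exact absurd (key v v hv) (lt_irrefl _)
  · intro k p hpath h0k i j hij hjk
    have hmono : ∀ m, m ≤ k → (c (p 0) : ℕ) + m ≤ c (p m) := by
      intro m
      induction m with
      | zero => omega
      | succ n ih =>
        intro hm
        have h1 := ih (by omega)
        have h2 := (hpath n (by omega)).2
        omega
    have hck : (c (p k) : ℕ) < 3 := (c (p k)).isLt
    have hk2 : k ≤ 2 := by have := hmono k le_rfl; omega
    interval_cases k
    · omega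
    · obtain ⟨rfl, rfl⟩ : i = 0 ∧ j = 1 := by omega
      exact h0k
    · rcases (by omega : i = 0 ∧ j = 1 ∨ i = 0 ∧ j = 2 ∨ i = 1 ∧ j = 2) with
        ⟨rfl, rfl⟩ | ⟨rfl, rfl⟩ | ⟨rfl, rfl⟩
      · exact hpath 0 (by omega)
      · exact h0k
      · exact hpath 1 (by omega)
end

section
/- Let G be a graph on n vertices with a vertex x of degree n−1 (adjacent to all other vertices), and let H = G − x. Then G is word-representable if and only if H is a comparability graph. -/
/-- `G` is a comparability graph: it admits a transitive orientation. -/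
def IsComparability {V : Type*} (G : SimpleGraph V) : Prop :=
  ∃ D, IsOrientation G D ∧ ∀ a b c, D a b → D b c → D a c


/-- Letters `i` and `j` alternate in word `w`. -/
def Alternate {α : Type*} [DecidableEq α] (w : List α) (i j : α) : Prop :=
  (w.filter (fun x => decide (x = i ∨ x = j))).Chain' (· ≠ ·)

/-- A word `w` over `V(G)` represents `G`. -/
def Represents {V : Type*} [DecidableEq V] (w : List V) (G : SimpleGraph V) : Prop :=
  (∀ v, v ∈ w) ∧ ∀ i j : V, i ≠ j → (Alternate w i j ↔ G.Adj i j)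

/-- `G` is word-representable. -/
def WordRepresentable {V : Type*} [DecidableEq V] (G : SimpleGraph V) : Prop :=
  ∃ w, Represents w G

open List

section Lists

variable {α : Type*}

theorem sublist_pair_trans [DecidableEq α] {a b c : α} {l : List α} (hab : [a, b] <+ l)
    (hbc : [b, c] <+ l) (hb : l.count b ≤ 1) : [a, c] <+ l := by
  induction l with
  | nil => simp at hab
  | cons d t ih =>
    rcases sublist_cons_iff.mp hab with hab' | ⟨_, ⟨rfl, rfl⟩, hbt⟩
    · rcases sublist_cons_iff.mp hbc with hbc' | ⟨_, ⟨rfl, rfl⟩, -⟩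
      · exact (ih hab' hbc' ((count_le_count_cons ..).trans hb)).cons d
      · have : 0 < t.count b := count_pos_iff.mpr (hab'.subset (by simp))
        simp at hb
        omega
    · have hct : c ∈ t := by
        rcases sublist_cons_iff.mp hbc with hbc' | ⟨_, ⟨rfl, rfl⟩, hct⟩
        · exact hbc'.subset (by simp)
        · exact hct.subset (by simp)
      simpa using hct

theorem not_sublist_pair_swap [DecidableEq α] {a b : α} {l : List α} (hab : [a, b] <+ l)
    (ha : l.count a ≤ 1) (hb : l.count b ≤ 1) : ¬ [b, a] <+ l := fun hba => by
  have := (sublist_pair_trans hab hba hb).count_le a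
  simp at this
  omega

theorem ne_of_sublist_pair [DecidableEq α] {a b : α} {l : List α} (h : [a, b] <+ l)
    (ha : l.count a ≤ 1) : a ≠ b := by
  rintro rfl
  have := h.count_le a
  simp at this
  omega

theorem sublist_pair_or_swap {a b : α} {l : List α} (ha : a ∈ l) (hb : b ∈ l) (hab : a ≠ b) :
    [a, b] <+ l ∨ [b, a] <+ l := by
  induction l with
  | nil => simp at ha
  | cons d t ih =>
    rcases mem_cons.mp ha with rfl | ha' <;> rcases mem_cons.mp hb with rfl | hb'
    · exact absurd rfl hab
    · exact .inl (by simpa using hb')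
    · exact .inr (by simpa using ha')
    · exact (ih ha' hb').imp (·.cons d) (·.cons d)

theorem sublist_pair_map_iff {β : Type*} {f : α → β} (hf : Function.Injective f) {a b : α}
    {l : List α} : [f a, f b] <+ l.map f ↔ [a, b] <+ l := by
  refine ⟨fun h => ?_, fun h => h.map f⟩
  obtain ⟨l', hl', he⟩ := sublist_map_iff.mp h
  rwa [map_injective_iff.mpr hf (by simpa using he.symm : l'.map f = [a, b].map f)] at hl'

theorem filter_dedup [DecidableEq α] (p : α → Bool) (l : List α) :
    l.dedup.filter p = (l.filter p).dedup := by
  induction l with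
  | nil => rfl
  | cons c t ih =>
    by_cases hc : c ∈ t <;> by_cases hp : p c <;>
      simp [hc, hp, dedup_cons_of_mem, dedup_cons_of_notMem, ih]

theorem getLast?_dedup [DecidableEq α] (l : List α) : l.dedup.getLast? = l.getLast? := by
  induction l with
  | nil => rfl
  | cons c t ih =>
    rcases t with _ | ⟨d, t⟩
    · simp
    by_cases hc : c ∈ d :: t
    · rw [dedup_cons_of_mem hc, ih, getLast?_cons_cons]
    · rw [dedup_cons_of_notMem hc, getLast?_cons_cons, ← ih]
      obtain ⟨e, u, hu⟩ := exists_cons_of_ne_nil (by simp [dedup_eq_nil] : (d :: t).dedup ≠ [])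
      rw [hu, getLast?_cons_cons]

theorem isChain_ne_replicate_iff {a : α} {n : ℕ} :
    (replicate n a).IsChain (· ≠ ·) ↔ n ≤ 1 := by
  match n with
  | 0 | 1 => simp
  | n + 2 => simp [replicate_succ]

theorem isChain_flatten_pairs_iff {a b : α} (hab : a ≠ b) {Ps : List (List α)}
    (h : ∀ P ∈ Ps, P = [a, b] ∨ P = [b, a]) :
    Ps.flatten.IsChain (· ≠ ·) ↔ Ps.IsChain (· = ·) := by
  rw [isChain_flatten fun h0 => by simpa using h [] h0]
  have hP : ∀ P ∈ Ps, P.IsChain (· ≠ ·) := fun P hP => by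
    rcases h P hP with rfl | rfl <;> simp [hab, hab.symm]
  rw [and_iff_right hP]
  refine IsChain.iff_of_mem_imp fun P Q hP hQ => ?_
  rcases h P hP with rfl | rfl <;> rcases h Q hQ with rfl | rfl <;> simp [hab, hab.symm]

end Lists

section PairFilter

variable {α : Type*} [DecidableEq α]

def pairFilter (a b : α) (l : List α) : List α := l.filter fun c => decide (c = a ∨ c = b)

theorem alternate_iff_isChain_pairFilter {w : List α} {a b : α} :
    Alternate w a b ↔ (pairFilter a b w).IsChain (· ≠ ·) := Iff.rfl

theorem pairFilter_comm (a b : α) (l : List α) : pairFilter a b l = pairFilter b a l := by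
  simp only [pairFilter, or_comm]

theorem alternate_comm {w : List α} {a b : α} : Alternate w a b ↔ Alternate w b a := by
  rw [alternate_iff_isChain_pairFilter, alternate_iff_isChain_pairFilter, pairFilter_comm]

@[simp] theorem pairFilter_append (a b : α) (l₁ l₂ : List α) :
    pairFilter a b (l₁ ++ l₂) = pairFilter a b l₁ ++ pairFilter a b l₂ :=
  filter_append ..

theorem pairFilter_flatten (a b : α) (L : List (List α)) :
    pairFilter a b L.flatten = (L.map (pairFilter a b)).flatten := by
  induction L with
  | nil => rfl
  | cons l L ih => simp [ih]

@[simp] theorem count_pairFilter_left (a b : α) (l : List α) :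
    (pairFilter a b l).count a = l.count a :=
  count_filter (by simp)

@[simp] theorem count_pairFilter_right (a b : α) (l : List α) :
    (pairFilter a b l).count b = l.count b :=
  count_filter (by simp)

@[simp] theorem mem_pairFilter {a b c : α} {l : List α} :
    c ∈ pairFilter a b l ↔ c ∈ l ∧ (c = a ∨ c = b) := by
  simp [pairFilter]

theorem pairFilter_eq_of_notMem_left {a b : α} {l : List α} (ha : a ∉ l) :
    pairFilter a b l = replicate (l.count b) b := by
  rw [pairFilter, ← filter_eq]
  exact filter_congr fun c hc => by simp [show c ≠ a by rintro rfl; exact ha hc]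

theorem sublist_pairFilter_iff {a b : α} {l : List α} :
    [a, b] <+ pairFilter a b l ↔ [a, b] <+ l :=
  ⟨fun h => h.trans filter_sublist,
    fun h => by simpa [pairFilter] using h.filter fun c => decide (c = a ∨ c = b)⟩

theorem pairFilter_cases {a b : α} {l : List α} (ha : l.count a ≤ 1) (hb : l.count b ≤ 1) :
    pairFilter a b l = [] ∨ pairFilter a b l = [a] ∨ pairFilter a b l = [b] ∨
      pairFilter a b l = [a, b] ∨ pairFilter a b l = [b, a] := by
  have hmem : ∀ c ∈ pairFilter a b l, c = a ∨ c = b := fun c hc => (mem_pairFilter.mp hc).2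
  rw [← count_pairFilter_left a b l] at ha
  rw [← count_pairFilter_right a b l] at hb
  generalize pairFilter a b l = p at ha hb hmem
  rcases p with _ | ⟨c, _ | ⟨d, _ | ⟨e, p⟩⟩⟩
  · simp
  · rcases hmem c (by simp) with rfl | rfl <;> simp
  · rcases hmem c (by simp) with rfl | rfl <;> rcases hmem d (by simp) with rfl | rfl <;>
      simp_all
  · rcases hmem c (by simp) with rfl | rfl <;> rcases hmem d (by simp) with rfl | rfl <;>
      rcases hmem e (by simp) with rfl | rfl <;> simp_all [count_cons] <;> omega

section AtMostOnce

variable {a b : α} {l : List α}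

theorem not_sublist_pair_swap_self (hab : a ≠ b) : ¬ [a, b] <+ [b, a] :=
  not_sublist_pair_swap (.refl _) (by simp [hab]) (by simp [hab.symm])

variable (hab : a ≠ b) (ha : l.count a ≤ 1) (hb : l.count b ≤ 1)
include hab ha hb

theorem isChain_pairFilter : (pairFilter a b l).IsChain (· ≠ ·) := by
  rcases pairFilter_cases ha hb with h | h | h | h | h <;> simp [h, hab, hab.symm]

theorem getLast?_pairFilter_ne_iff :
    (pairFilter a b l).getLast? ≠ some a ↔ (a ∈ l → [a, b] <+ l) := by
  rw [show a ∈ l ↔ a ∈ pairFilter a b l by simp, ← sublist_pairFilter_iff]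
  rcases pairFilter_cases ha hb with h | h | h | h | h <;>
    simp [h, hab, hab.symm, not_sublist_pair_swap_self hab]

theorem head?_pairFilter_ne_iff :
    (pairFilter a b l).head? ≠ some b ↔ (b ∈ l → [a, b] <+ l) := by
  rw [show b ∈ l ↔ b ∈ pairFilter a b l by simp, ← sublist_pairFilter_iff]
  rcases pairFilter_cases ha hb with h | h | h | h | h <;>
    simp [h, hab, hab.symm, not_sublist_pair_swap_self hab]

end AtMostOnce

section ExactlyOnce

variable {a b : α} {l : List α} (hab : a ≠ b) (ha : l.count a = 1) (hb : l.count b = 1)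
include hab ha hb

theorem pairFilter_eq_pair_or : pairFilter a b l = [a, b] ∨ pairFilter a b l = [b, a] := by
  have hma : a ∈ pairFilter a b l := by simp [← count_pos_iff, ha]
  have hmb : b ∈ pairFilter a b l := by simp [← count_pos_iff, hb]
  rcases pairFilter_cases ha.le hb.le with h | h | h | h | h <;> simp_all

theorem pairFilter_eq_pair_of_sublist (h : [a, b] <+ l) : pairFilter a b l = [a, b] :=
  (pairFilter_eq_pair_or hab ha hb).resolve_right fun h' =>
    not_sublist_pair_swap_self hab (h' ▸ sublist_pairFilter_iff.mpr h)

end ExactlyOnce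

theorem alternate_append_dedup_iff {w : List α} {a b : α} (hab : a ≠ b) (ha : a ∈ w)
    (hb : b ∈ w) : Alternate (w ++ w.dedup) a b ↔ Alternate w a b := by
  rw [alternate_iff_isChain_pairFilter, alternate_iff_isChain_pairFilter, pairFilter_append,
    isChain_append]
  refine ⟨fun h => h.1, fun h => ⟨h, ?_⟩⟩
  have hlast : (pairFilter a b w).getLast? = (pairFilter a b w.dedup).getLast? := by
    rw [pairFilter, pairFilter, filter_dedup, getLast?_dedup]
  rcases pairFilter_eq_pair_or (l := w.dedup) hab (by simp [count_dedup, ha])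
    (by simp [count_dedup, hb]) with h | h <;>
    rw [h] at hlast ⊢ <;> simp [hlast, hab, hab.symm]

theorem Represents.append_dedup {w : List α} {G : SimpleGraph α} (h : Represents w G) :
    Represents (w ++ w.dedup) G :=
  ⟨fun v => mem_append_left _ (h.1 v), fun i j hij =>
    (alternate_append_dedup_iff hij (h.1 i) (h.1 j)).trans (h.2 i j hij)⟩

end PairFilter

/-- A word cut at the occurrences of a letter `x`: `pre x B₁ x ⋯ Bₘ x post`. -/
structure BlockSplit (α : Type*) where
  pre : List α
  mid : List (List α)
  post : List α

namespace BlockSplit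

variable {α : Type*}

def join (s : BlockSplit α) (x : α) : List α :=
  s.pre ++ x :: (s.mid.map (· ++ [x])).flatten ++ s.post

def Avoids (s : BlockSplit α) (x : α) : Prop := x ∉ s.pre ∧ (∀ B ∈ s.mid, x ∉ B) ∧ x ∉ s.post

/-- The condition under which `a` and `b` alternate in `s.join x` with `a` first in every inner
block (see `alternate_join_iff`). -/
def Precedes (s : BlockSplit α) (a b : α) : Prop :=
  (a ∈ s.pre → [a, b] <+ s.pre) ∧ (∀ B ∈ s.mid, [a, b] <+ B) ∧ (b ∈ s.post → [a, b] <+ s.post)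

variable [DecidableEq α]

def Once (s : BlockSplit α) (y : α) : Prop :=
  s.pre.count y ≤ 1 ∧ (∀ B ∈ s.mid, B.count y = 1) ∧ s.post.count y ≤ 1

theorem exists_join_eq {x : α} {w : List α} (hx : x ∈ w) :
    ∃ s : BlockSplit α, s.Avoids x ∧ s.join x = w := by
  induction w with
  | nil => simp at hx
  | cons c t ih =>
    by_cases hc : c = x
    · subst hc
      by_cases hct : c ∈ t
      · obtain ⟨⟨pre, mid, post⟩, ⟨hpre, hmid, hpost⟩, rfl⟩ := ih hct
        refine ⟨⟨[], pre :: mid, post⟩, ⟨by simp, ?_, hpost⟩, by simp [join]⟩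
        simpa using ⟨hpre, hmid⟩
      · exact ⟨⟨[], [], t⟩, ⟨by simp, by simp, hct⟩, by simp [join]⟩
    · obtain ⟨⟨pre, mid, post⟩, ⟨hpre, hmid, hpost⟩, rfl⟩ :=
        ih ((mem_cons.mp hx).resolve_left (Ne.symm hc))
      exact ⟨⟨c :: pre, mid, post⟩, ⟨by simp [hpre, Ne.symm hc], hmid, hpost⟩, by simp [join]⟩

variable {s : BlockSplit α} {x a b c : α}

theorem count_join_self (h : s.Avoids x) : (s.join x).count x = s.mid.length + 1 := by
  obtain ⟨hpre, hmid, hpost⟩ := h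
  have hzero : (s.mid.map (count x)).sum = 0 :=
    sum_eq_zero (by simpa using fun B hB => count_eq_zero.mpr (hmid B hB))
  simp [join, count_flatten, count_eq_zero.mpr hpre, count_eq_zero.mpr hpost, Function.comp_def,
    hzero]

theorem pairFilter_join_self (h : s.Avoids x) (y : α) :
    pairFilter x y (s.join x) = replicate (s.pre.count y) y ++
      x :: (s.mid.map fun B => replicate (B.count y) y ++ [x]).flatten ++
        replicate (s.post.count y) y := by
  obtain ⟨hpre, hmid, hpost⟩ := h
  have hx : pairFilter x y [x] = [x] := by simp [pairFilter]
  rw [join, pairFilter_append, ← singleton_append, pairFilter_append, pairFilter_append, hx,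
    pairFilter_flatten, pairFilter_eq_of_notMem_left hpre, pairFilter_eq_of_notMem_left hpost,
    map_map]
  congr 4
  refine congrArg (x :: ·) (congrArg flatten (map_congr_left fun B hB => ?_))
  simp [pairFilter_eq_of_notMem_left (hmid B hB), hx]

theorem isChain_cons_flatten_replicate_iff {y : α} (hxy : x ≠ y) (Bs : List (List α)) (k : ℕ) :
    (x :: (Bs.map fun B => replicate (B.count y) y ++ [x]).flatten ++ replicate k y).IsChain
      (· ≠ ·) ↔ (∀ B ∈ Bs, B.count y = 1) ∧ k ≤ 1 := by
  induction Bs with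
  | nil =>
    match k with
    | 0 | 1 => simp [hxy]
    | k + 2 => simp [replicate_succ]
  | cons B Bs ih =>
    simp only [map_cons, flatten_cons, forall_mem_cons]
    match B.count y with
    | 0 => simp
    | 1 => simpa [hxy, hxy.symm] using ih
    | c + 2 => simp [replicate_succ]

theorem alternate_join_self_iff (h : s.Avoids x) {y : α} (hy : y ≠ x) :
    Alternate (s.join x) x y ↔ s.Once y := by
  rw [alternate_iff_isChain_pairFilter, pairFilter_join_self h, append_assoc, isChain_append,
    isChain_ne_replicate_iff, isChain_cons_flatten_replicate_iff hy.symm, Once]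
  have hjunction : ∀ u, (replicate (s.pre.count y) y).getLast? = some u → u ≠ x := by
    simp [getLast?_replicate, hy]
  simpa [and_assoc] using fun _ _ _ => hjunction

theorem pairFilter_join (ha : a ≠ x) (hb : b ≠ x) :
    pairFilter a b (s.join x) =
      pairFilter a b s.pre ++ ((s.mid.map (pairFilter a b)).flatten ++ pairFilter a b s.post) := by
  have hx : pairFilter a b [x] = [] := by simp [pairFilter, ha.symm, hb.symm]
  rw [join, pairFilter_append, ← singleton_append, pairFilter_append, pairFilter_append, hx,
    pairFilter_flatten, map_map, nil_append, append_assoc]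
  congr 3
  exact map_congr_left fun B _ => by simp [hx]

theorem Once.pairFilter_mid (hab : a ≠ b) (ha : s.Once a) (hb : s.Once b) :
    ∀ P ∈ s.mid.map (pairFilter a b), P = [a, b] ∨ P = [b, a] := by
  simp only [mem_map, forall_exists_index, and_imp, forall_apply_eq_imp_iff₂]
  exact fun B hB => pairFilter_eq_pair_or hab (ha.2.1 B hB) (hb.2.1 B hB)

theorem Precedes.pairFilter_mid (hab : a ≠ b) (hao : s.Once a) (hbo : s.Once b)
    (h : s.Precedes a b) : ∀ B ∈ s.mid, pairFilter a b B = [a, b] := fun B hB =>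
  pairFilter_eq_pair_of_sublist hab (hao.2.1 B hB) (hbo.2.1 B hB) (h.2.1 B hB)

section Pair

variable (ha : a ≠ x) (hb : b ≠ x) (hab : a ≠ b) (hao : s.Once a) (hbo : s.Once b)
  (hne : s.mid ≠ [])
include ha hb hab hao hbo hne

theorem alternate_join_iff_precedes_of_forall (hmid : ∀ B ∈ s.mid, pairFilter a b B = [a, b]) :
    Alternate (s.join x) a b ↔ s.Precedes a b := by
  have hall : ∀ P ∈ s.mid.map (pairFilter a b), P = [a, b] := by simpa using hmid
  have hchain : (s.mid.map (pairFilter a b)).flatten.IsChain (· ≠ ·) := by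
    rw [isChain_flatten_pairs_iff hab fun P hP => .inl (hall P hP),
      eq_replicate_iff.mpr ⟨rfl, hall⟩]
    exact isChain_replicate_of_rel _ rfl
  have hhead : (s.mid.map (pairFilter a b)).flatten.head? = some a := by
    obtain ⟨B, mid, hBmid⟩ := exists_cons_of_ne_nil hne
    simp [hBmid, hmid B (by simp [hBmid])]
  have hlast : (s.mid.map (pairFilter a b)).flatten.getLast? = some b := by
    rw [← dropLast_append_getLast hne]
    simp [hmid _ (getLast_mem hne)]
  have hsub : ∀ B ∈ s.mid, [a, b] <+ B := fun B hB =>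
    sublist_pairFilter_iff.mp (hmid B hB ▸ .refl _)
  rw [alternate_iff_isChain_pairFilter, pairFilter_join ha hb, isChain_append, isChain_append,
    head?_append, hhead, hlast, Precedes, ← getLast?_pairFilter_ne_iff hab hao.1 hbo.1,
    ← head?_pairFilter_ne_iff hab hao.2.2 hbo.2.2, eq_true hsub, true_and]
  simp only [isChain_pairFilter hab hao.1 hbo.1, isChain_pairFilter hab hao.2.2 hbo.2.2, hchain,
    true_and, Option.some_or]
  cases (pairFilter a b s.pre).getLast? <;> cases (pairFilter a b s.post).head? <;>
    simp [eq_comm, and_comm]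

theorem alternate_join_iff : Alternate (s.join x) a b ↔ s.Precedes a b ∨ s.Precedes b a := by
  refine ⟨fun halt => ?_, ?_⟩
  · have hchain := halt
    rw [alternate_iff_isChain_pairFilter, pairFilter_join ha hb] at hchain
    replace hchain := hchain.right_of_append.left_of_append
    rw [isChain_flatten_pairs_iff hab (Once.pairFilter_mid hab hao hbo),
      isChain_eq_iff_eq_replicate] at hchain
    obtain ⟨B, mid, hmid⟩ := exists_cons_of_ne_nil hne
    have hB : B ∈ s.mid := by simp [hmid]
    have hall : ∀ C ∈ s.mid, pairFilter a b C = pairFilter a b B := fun C hC =>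
      eq_of_mem_replicate (hchain (pairFilter a b B) (by simp [hmid]) ▸ mem_map_of_mem hC)
    rcases pairFilter_eq_pair_or hab (hao.2.1 B hB) (hbo.2.1 B hB) with h | h
    · exact .inl ((alternate_join_iff_precedes_of_forall ha hb hab hao hbo hne
        fun C hC => (hall C hC).trans h).mp halt)
    · refine .inr ((alternate_join_iff_precedes_of_forall hb ha hab.symm hbo hao hne
        fun C hC => ?_).mp (alternate_comm.mp halt))
      rw [pairFilter_comm, hall C hC, h]
  · rintro (h | h)
    · exact (alternate_join_iff_precedes_of_forall ha hb hab hao hbo hne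
        (h.pairFilter_mid hab hao hbo)).mpr h
    · exact alternate_comm.mpr ((alternate_join_iff_precedes_of_forall hb ha hab.symm hbo hao
        hne (h.pairFilter_mid hab.symm hbo hao)).mpr h)

omit hne in
theorem precedes_of_alternate {B : List α} (hB : B ∈ s.mid) (halt : Alternate (s.join x) a b)
    (hsub : [a, b] <+ B) : s.Precedes a b :=
  ((alternate_join_iff ha hb hab hao hbo (ne_nil_of_mem hB)).mp halt).resolve_right fun h =>
    not_sublist_pair_swap hsub (hao.2.1 B hB).le (hbo.2.1 B hB).le (h.2.1 B hB)

end Pair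

theorem Precedes.trans (hb : s.Once b) (hab : s.Precedes a b) (hbc : s.Precedes b c) :
    s.Precedes a c :=
  ⟨fun ha => sublist_pair_trans (hab.1 ha) (hbc.1 ((hab.1 ha).subset (by simp))) hb.1,
    fun B hB => sublist_pair_trans (hab.2.1 B hB) (hbc.2.1 B hB) (hb.2.1 B hB).le,
    fun hc => sublist_pair_trans (hab.2.2 ((hbc.2.2 hc).subset (by simp))) (hbc.2.2 hc) hb.2.2⟩

end BlockSplit

section Forward

variable {V : Type*} [DecidableEq V] {G : SimpleGraph V} {x : V}

theorem exists_blockSplit_of_represents (hx : ∀ v, v ≠ x → G.Adj x v) {w : List V}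
    (hw : Represents w G) : ∃ s : BlockSplit V, Represents (s.join x) G ∧ s.Avoids x ∧
      s.mid ≠ [] ∧ ∀ y, y ≠ x → s.Once y := by
  have hw₂ := hw.append_dedup
  obtain ⟨s, hs, hjoin⟩ := BlockSplit.exists_join_eq (hw₂.1 x)
  rw [← hjoin] at hw₂
  refine ⟨s, hw₂, hs, fun hnil => ?_, fun y hy =>
    (BlockSplit.alternate_join_self_iff hs hy).mp ((hw₂.2 x y hy.symm).mpr (hx y hy))⟩
  have hcount := BlockSplit.count_join_self hs
  rw [hjoin, hnil, count_append, count_dedup, if_pos (hw.1 x)] at hcount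
  have := count_pos_iff.mpr (hw.1 x)
  simp at hcount
  omega

theorem isComparability_induce_of_wordRepresentable (hx : ∀ v, v ≠ x → G.Adj x v)
    (h : WordRepresentable G) : IsComparability (G.induce {v | v ≠ x}) := by
  obtain ⟨w, hw⟩ := h
  obtain ⟨s, hrep, hs, hne, honce⟩ := exists_blockSplit_of_represents hx hw
  obtain ⟨B, mid, hmid⟩ := exists_cons_of_ne_nil hne
  have hB : B ∈ s.mid := by simp [hmid]
  have hcount (a : {v | v ≠ x}) : B.count a.1 = 1 := (honce a a.2).2.1 B hB
  have hprec (a b : {v | v ≠ x}) (hab : G.Adj a b) (hsub : [a.1, b.1] <+ B) : s.Precedes a b :=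
    BlockSplit.precedes_of_alternate a.2 b.2 hab.ne (honce a a.2) (honce b b.2) hB
      ((hrep.2 a b hab.ne).mpr hab) hsub
  refine ⟨fun a b => G.Adj a b ∧ [a.1, b.1] <+ B, ⟨fun a b h => h.1, fun a b hab => ?_⟩, ?_⟩
  · have hadj : G.Adj a b := hab
    have hmem (c : {v | v ≠ x}) : c.1 ∈ B := count_pos_iff.mp (by rw [hcount c]; exact one_pos)
    refine ⟨fun h h' => not_sublist_pair_swap h.2 (hcount a).le (hcount b).le h'.2,
      fun h => ⟨hadj, ?_⟩⟩
    exact (sublist_pair_or_swap (hmem a) (hmem b) hadj.ne).resolve_right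
      fun h' => h ⟨hadj.symm, h'⟩
  · rintro a b c ⟨hab, hab'⟩ ⟨hbc, hbc'⟩
    have hac := (hprec a b hab hab').trans (honce b b.2) (hprec b c hbc hbc')
    have hac' : a.1 ≠ c.1 := ne_of_sublist_pair (hac.2.1 B hB) (hcount a).le
    exact ⟨(hrep.2 a c hac').mp ((BlockSplit.alternate_join_iff a.2 c.2 hac' (honce a a.2)
      (honce c c.2) hne).mpr (.inl hac)), hac.2.1 B hB⟩

end Forward

section Realizer

variable {β : Type*} [DecidableEq β] {D : β → β → Prop}

def IsLinearExtensionList (D : β → β → Prop) (L : List β) : Prop :=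
  (∀ c, L.count c = 1) ∧ ∀ a b, D a b → [a, b] <+ L

theorem IsLinearExtensionList.mem {L : List β} (hL : IsLinearExtensionList D L) (c : β) :
    c ∈ L :=
  count_pos_iff.mp (by rw [hL.1 c]; exact one_pos)

theorem exists_isLinearExtensionList [Fintype β] (hirr : ∀ a, ¬ D a a)
    (htrans : ∀ a b c, D a b → D b c → D a c) : ∃ L, IsLinearExtensionList D L := by
  classical
  let rank (a : β) : ℕ := (Finset.univ.filter (D · a)).card
  have hrank (a b : β) (h : D a b) : rank a < rank b :=
    Finset.card_lt_card ⟨fun c hc => by simpa using htrans c a b (by simpa using hc) h,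
      fun hsub => hirr a (by simpa using hsub (by simpa using h))⟩
  let L := Finset.univ.toList.mergeSort fun a b => decide (rank a ≤ rank b)
  have hsorted : L.Pairwise fun a b => decide (rank a ≤ rank b) :=
    pairwise_mergeSort (fun a b c => by simpa using le_trans)
      (fun a b => by simpa using le_total _ _) _
  have hmem (c : β) : c ∈ L := by simp [L]
  refine ⟨L, fun c => ?_, fun a b h => ?_⟩
  · rw [(mergeSort_perm _ _).count_eq]
    exact count_eq_one_of_mem (Finset.nodup_toList _) (by simp)
  · refine (sublist_pair_or_swap (hmem a) (hmem b) fun e => hirr a (e ▸ h)).resolve_right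
      fun h' => ?_
    have := hsorted.sublist h'
    simp only [pairwise_cons, mem_singleton, forall_eq, decide_eq_true_eq] at this
    exact absurd this.1 (not_le.mpr (hrank a b h))

theorem IsLinearExtensionList.filter_append {L : List β} (hL : IsLinearExtensionList D L)
    (U : β → Prop) [DecidablePred U] (hU : ∀ a b, D a b → U a → U b) :
    IsLinearExtensionList D (L.filter (¬ U ·) ++ L.filter (U ·)) := by
  refine ⟨fun c => ?_, fun a b h => ?_⟩
  · have hperm : L.filter (¬ U ·) ++ L.filter (U ·) ~ L := by
      simpa using perm_append_comm.trans (filter_append_perm (fun c => decide (U c)) L)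
    rw [hperm.count_eq, hL.1 c]
  by_cases hb : U b
  · by_cases ha : U a
    · exact sublist_append_of_sublist_right
        (by simpa [ha, hb] using (hL.2 a b h).filter fun c => decide (U c))
    · exact (singleton_sublist.mpr (mem_filter.mpr ⟨hL.mem a, by simpa using ha⟩)).append
        (singleton_sublist.mpr (mem_filter.mpr ⟨hL.mem b, by simpa using hb⟩))
  · have ha : ¬ U a := fun ha => hb (hU a b h ha)
    exact sublist_append_of_sublist_left
      (by simpa [ha, hb] using (hL.2 a b h).filter fun c => decide ¬ U c)

theorem exists_realizer [Fintype β] (hirr : ∀ a, ¬ D a a)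
    (htrans : ∀ a b c, D a b → D b c → D a c) :
    ∃ Ls : List (List β), Ls ≠ [] ∧ (∀ L ∈ Ls, ∀ c, L.count c = 1) ∧
      ∀ a b, D a b ↔ ∀ L ∈ Ls, [a, b] <+ L := by
  classical
  obtain ⟨L₀, hL₀⟩ := exists_isLinearExtensionList hirr htrans
  let up (q u : β) : Prop := q = u ∨ D q u
  have hup (q a b : β) (h : D a b) : up q a → up q b := by
    rintro (rfl | hqa)
    exacts [.inr h, .inr (htrans _ _ _ hqa h)]
  let Ls := L₀ :: Finset.univ.toList.map fun q => L₀.filter (¬ up q ·) ++ L₀.filter (up q ·)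
  have hext : ∀ L ∈ Ls, IsLinearExtensionList D L :=
    forall_mem_cons.mpr ⟨hL₀, forall_mem_map.mpr fun q _ => hL₀.filter_append (up q) (hup q)⟩
  refine ⟨Ls, cons_ne_nil _ _, fun L hL => (hext L hL).1, fun a b =>
    ⟨fun h L hL => (hext L hL).2 a b h, fun h => by_contra fun hab => ?_⟩⟩
  have hne : a ≠ b := ne_of_sublist_pair (h L₀ (mem_cons_self ..)) (hL₀.1 a).le
  have hLa : L₀.filter (¬ up a ·) ++ L₀.filter (up a ·) ∈ Ls :=
    mem_cons_of_mem _ (mem_map_of_mem (Finset.mem_toList.mpr (Finset.mem_univ a)))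
  refine not_sublist_pair_swap (h _ hLa) ((hext _ hLa).1 a).le ((hext _ hLa).1 b).le ?_
  exact (singleton_sublist.mpr (mem_filter.mpr ⟨hL₀.mem b, by simp [up, hne, hab]⟩)).append
    (singleton_sublist.mpr (mem_filter.mpr ⟨hL₀.mem a, by simp [up]⟩))

end Realizer

namespace BlockSplit

variable {α β : Type*}

def ofMid (Bs : List (List α)) : BlockSplit α := ⟨[], Bs, []⟩

variable {f : β → α} {Ls : List (List β)}

theorem avoids_ofMid_map {x : α} (hx : ∀ c, f c ≠ x) : (ofMid (Ls.map (map f))).Avoids x :=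
  ⟨not_mem_nil, by simpa [ofMid] using fun _ _ c _ => hx c, not_mem_nil⟩

theorem precedes_ofMid_map_iff (hf : Function.Injective f) {a b : β} :
    (ofMid (Ls.map (map f))).Precedes (f a) (f b) ↔ ∀ L ∈ Ls, [a, b] <+ L := by
  simp [Precedes, ofMid, sublist_pair_map_iff hf]

variable [DecidableEq α]

theorem once_ofMid_map [DecidableEq β] (hf : Function.Injective f) {c : β}
    (h : ∀ L ∈ Ls, L.count c = 1) : (ofMid (Ls.map (map f))).Once (f c) :=
  ⟨by simp [ofMid], by simpa [ofMid, count_map_of_injective _ _ hf], by simp [ofMid]⟩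

theorem represents_join {G : SimpleGraph α} {s : BlockSplit α} {x : α}
    (hx : ∀ v, v ≠ x → G.Adj x v) (hs : s.Avoids x) (hne : s.mid ≠ [])
    (honce : ∀ y, y ≠ x → s.Once y)
    (hadj : ∀ a b, a ≠ x → b ≠ x → a ≠ b → (G.Adj a b ↔ s.Precedes a b ∨ s.Precedes b a)) :
    Represents (s.join x) G := by
  refine ⟨fun v => ?_, fun i j hij => ?_⟩
  · by_cases hv : v = x
    · simp [hv, join]
    obtain ⟨B, hB⟩ := exists_mem_of_ne_nil _ hne
    have hvB : v ∈ B := count_pos_iff.mp (by rw [(honce v hv).2.1 B hB]; exact one_pos)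
    simp only [join, mem_append, mem_cons, mem_flatten, mem_map]
    exact .inl (.inr (.inr ⟨_, ⟨B, hB, rfl⟩, mem_append_left _ hvB⟩))
  by_cases hi : i = x
  · subst hi
    exact iff_of_true ((alternate_join_self_iff hs hij.symm).mpr (honce j hij.symm))
      (hx j hij.symm)
  by_cases hj : j = x
  · subst hj
    exact iff_of_true (alternate_comm.mp ((alternate_join_self_iff hs hi).mpr (honce i hi)))
      (hx i hi).symm
  exact (alternate_join_iff hi hj hij (honce i hi) (honce j hj) hne).trans
    (hadj i j hi hj hij).symm

end BlockSplit

theorem IsOrientation.irrefl {W : Type*} {H : SimpleGraph W} {D : W → W → Prop}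
    (hD : IsOrientation H D) (a : W) : ¬ D a a :=
  fun h => (hD.1 a a h).ne rfl

theorem IsOrientation.adj_iff {W : Type*} {H : SimpleGraph W} {D : W → W → Prop}
    (hD : IsOrientation H D) {a b : W} : H.Adj a b ↔ D a b ∨ D b a :=
  ⟨fun h => (em (D a b)).imp_right fun hn => by_contra fun h' => hn ((hD.2 a b h).mpr h'),
    fun h => h.elim (hD.1 a b) fun h => (hD.1 b a h).symm⟩

theorem wordRepresentable_of_isComparability_induce {V : Type*} [Fintype V] [DecidableEq V]
    {G : SimpleGraph V} {x : V} (hx : ∀ v, v ≠ x → G.Adj x v)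
    (h : IsComparability (G.induce {v | v ≠ x})) : WordRepresentable G := by
  obtain ⟨D, hD, htrans⟩ := h
  obtain ⟨Ls, hne, hcount, hreal⟩ := exists_realizer hD.irrefl htrans
  let s := BlockSplit.ofMid (Ls.map (map Subtype.val))
  refine ⟨s.join x, BlockSplit.represents_join hx (BlockSplit.avoids_ofMid_map fun c => c.2)
    (by simpa [s, BlockSplit.ofMid] using hne)
    (fun y hy => BlockSplit.once_ofMid_map (c := ⟨y, hy⟩) Subtype.val_injective
      fun L hL => hcount L hL _) fun a b ha hb hab => ?_⟩
  rw [BlockSplit.precedes_ofMid_map_iff (a := ⟨a, ha⟩) (b := ⟨b, hb⟩) Subtype.val_injective,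
    BlockSplit.precedes_ofMid_map_iff (a := ⟨b, hb⟩) (b := ⟨a, ha⟩) Subtype.val_injective,
    ← hreal, ← hreal]
  exact hD.adj_iff (a := ⟨a, ha⟩) (b := ⟨b, hb⟩)

/-- If `x` is adjacent to all other vertices of `G` and `H = G − x`, then `G`
is word-representable iff `H` is a comparability graph. -/
theorem stmt11 {V : Type*} [Fintype V] [DecidableEq V] (G : SimpleGraph V) (x : V)
    (hx : ∀ v, v ≠ x → G.Adj x v) :
    WordRepresentable G ↔ IsComparability (G.induce {v | v ≠ x}) :=
  ⟨isComparability_induce_of_wordRepresentable hx, wordRepresentable_of_isComparability_induce hx⟩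
end

section
/- If a graph G is word-representable, then for any vertex v of G there exists a semi-transitive orientation of G in which v is a source (all edges incident to v are directed away from v). -/
open Relation

/-!
A word `w` representing `G` orients `G` semi-transitively: direct `x → y` when `x` and `y`
alternate in `w` with `x` first. Prefix letter counts decrease along directed paths, which gives
both acyclicity and the shortcut condition.

To make `v` a source, let `S` be the set of vertices having a directed path to `v` and reverse
every edge between `S` and its complement. No edge enters `S` from outside, so a directed path
stays outside `S` until it enters `S` for good; a path with a shortcut that does enter `S`, read
cyclically from its entry point, is a path with a shortcut of the original orientation, which
yields the shortcut condition for the new one.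
-/

section

variable {V : Type*}

theorem transGen_of_path {R : V → V → Prop} {k : ℕ} {p : ℕ → V}
    (hp : ∀ i < k, R (p i) (p (i + 1))) {i j : ℕ} (hij : i < j) (hjk : j ≤ k) :
    TransGen R (p i) (p j) := by
  induction j, hij using Nat.le_induction with
  | base => exact .single (hp i (by omega))
  | succ j _ ih => exact (ih (by omega)).tail (hp j (by omega))

theorem reflTransGen_of_path {R : V → V → Prop} {k : ℕ} {p : ℕ → V}
    (hp : ∀ i < k, R (p i) (p (i + 1))) {i j : ℕ} (hij : i ≤ j) (hjk : j ≤ k) :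
    ReflTransGen R (p i) (p j) := by
  rcases hij.eq_or_lt with rfl | hij
  · exact .refl
  · exact (transGen_of_path hp hij hjk).to_reflTransGen

namespace IsSemiTransitive

variable {D : V → V → Prop}

/-- The hypotheses say that `p n → ⋯ → p k → p 0 → ⋯ → p (n - 1)` is a path with shortcut
`p n → p (n - 1)`; the conclusion lists its forward edges in the original indexing. -/
theorem rotate (hD : IsSemiTransitive D) {k n : ℕ} {p : ℕ → V} (hn : 0 < n) (hnk : n ≤ k)
    (hp : ∀ i < k, i + 1 ≠ n → D (p i) (p (i + 1)))
    (hback : D (p n) (p (n - 1))) (hwrap : D (p k) (p 0)) {i j : ℕ} (hij : i < j)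
    (hjk : j ≤ k) :
    if (i < n ↔ j < n) then D (p i) (p j) else D (p j) (p i) := by
  set q : ℕ → V := fun i => p (if i + n ≤ k then i + n else i + n - (k + 1)) with hq
  have hq₁ : ∀ a b, a + n = b → b ≤ k → q a = p b := by
    rintro a b rfl hb; simp only [hq, if_pos hb]
  have hq₂ : ∀ a b, a + n = b + (k + 1) → q a = p b := by
    intro a b hab; simp only [hq, if_neg (show ¬ a + n ≤ k by omega)]; congr 1; omega
  have hqpath : ∀ a < k, D (q a) (q (a + 1)) := by
    intro a ha
    rcases lt_trichotomy (a + n) k with h | h | h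
    · rw [hq₁ a _ rfl h.le, hq₁ (a + 1) (a + n + 1) (by omega) h]
      exact hp _ h (by omega)
    · rw [hq₁ a k h le_rfl, hq₂ (a + 1) 0 (by omega)]
      exact hwrap
    · rw [hq₂ a (a + n - (k + 1)) (by omega), hq₂ (a + 1) (a + n - (k + 1) + 1) (by omega)]
      exact hp _ (by omega) (by omega)
  have hqshort : D (q 0) (q k) := by
    rw [hq₁ 0 n (by omega) hnk, hq₂ k (n - 1) (by omega)]
    exact hback
  have key := hD.2 k q hqpath hqshort
  split_ifs with h
  · by_cases hi : i < n
    · rw [← hq₂ (i + (k + 1) - n) i (by omega), ← hq₂ (j + (k + 1) - n) j (by omega)]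
      exact key _ _ (by omega) (by omega)
    · rw [← hq₁ (i - n) i (by omega) (by omega), ← hq₁ (j - n) j (by omega) hjk]
      exact key _ _ (by omega) (by omega)
  · rw [← hq₁ (j - n) j (by omega) hjk, ← hq₂ (i + (k + 1) - n) i (by omega)]
    exact key _ _ (by omega) (by omega)

end IsSemiTransitive

open scoped Classical in
def flipAcross (D : V → V → Prop) (S : Set V) (x y : V) : Prop :=
  if (x ∈ S ↔ y ∈ S) then D x y else D y x

section flipAcross

variable {D : V → V → Prop} {S : Set V} {x y : V}

theorem flipAcross_iff_of_iff (h : x ∈ S ↔ y ∈ S) : flipAcross D S x y ↔ D x y := by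
  rw [flipAcross, if_pos h]

theorem flipAcross_iff_of_not_iff (h : ¬ (x ∈ S ↔ y ∈ S)) : flipAcross D S x y ↔ D y x := by
  rw [flipAcross, if_neg h]

theorem isOrientation_flipAcross {G : SimpleGraph V} (hD : IsOrientation G D) :
    IsOrientation G (flipAcross D S) := by
  refine ⟨fun u v huv => ?_, fun u v huv => ?_⟩
  · by_cases h : u ∈ S ↔ v ∈ S
    · exact hD.1 u v ((flipAcross_iff_of_iff h).mp huv)
    · exact (hD.1 v u ((flipAcross_iff_of_not_iff h).mp huv)).symm
  · by_cases h : u ∈ S ↔ v ∈ S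
    · rw [flipAcross_iff_of_iff h, flipAcross_iff_of_iff h.symm]
      exact hD.2 u v huv
    · rw [flipAcross_iff_of_not_iff h, flipAcross_iff_of_not_iff (mt Iff.symm h)]
      exact hD.2 v u huv.symm

variable (hS : ∀ x y, D x y → y ∈ S → x ∈ S)
include hS

theorem mem_and_of_flipAcross (h : flipAcross D S x y) (hx : x ∈ S) : y ∈ S ∧ D x y := by
  by_cases hy : y ∈ S
  · exact ⟨hy, (flipAcross_iff_of_iff (iff_of_true hx hy)).mp h⟩
  · exact absurd (hS y x ((flipAcross_iff_of_not_iff (by tauto)).mp h) hx) hy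

theorem notMem_and_of_flipAcross (h : flipAcross D S x y) (hy : y ∉ S) : x ∉ S ∧ D x y := by
  have hx : x ∉ S := fun hx => hy (mem_and_of_flipAcross hS h hx).1
  exact ⟨hx, (flipAcross_iff_of_iff (iff_of_false hx hy)).mp h⟩

theorem mem_and_transGen_of_transGen_flipAcross (h : TransGen (flipAcross D S) x y)
    (hx : x ∈ S) : y ∈ S ∧ TransGen D x y := by
  induction h with
  | single h => exact (mem_and_of_flipAcross hS h hx).imp_right .single
  | tail _ h ih => exact (mem_and_of_flipAcross hS h ih.1).imp_right ih.2.tail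

theorem notMem_and_transGen_of_transGen_flipAcross (h : TransGen (flipAcross D S) x y)
    (hy : y ∉ S) : x ∉ S ∧ TransGen D x y := by
  induction h using TransGen.head_induction_on with
  | single h => exact (notMem_and_of_flipAcross hS h hy).imp_right .single
  | head h _ ih => exact (notMem_and_of_flipAcross hS h ih.1).imp_right (ih.2.head ·)

theorem acyclic_flipAcross (hD : ∀ x, ¬ TransGen D x x) (x : V) :
    ¬ TransGen (flipAcross D S) x x := fun h => by
  by_cases hx : x ∈ S
  · exact hD x (mem_and_transGen_of_transGen_flipAcross hS h hx).2
  · exact hD x (notMem_and_transGen_of_transGen_flipAcross hS h hx).2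

theorem mem_of_path_flipAcross {k : ℕ} {p : ℕ → V}
    (hp : ∀ i < k, flipAcross D S (p i) (p (i + 1))) {a b : ℕ} (hab : a ≤ b) (hbk : b ≤ k)
    (ha : p a ∈ S) : p b ∈ S := by
  induction b, hab using Nat.le_induction with
  | base => exact ha
  | succ b _ ih => exact (mem_and_of_flipAcross hS (hp b (by omega)) (ih (by omega))).1

theorem isSemiTransitive_flipAcross (hD : IsSemiTransitive D) :
    IsSemiTransitive (flipAcross D S) := by
  refine ⟨acyclic_flipAcross hS hD.1, fun k p hp hpk i j hij hjk => ?_⟩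
  have same_side (hside : ∀ a ≤ k, p a ∈ S ↔ p 0 ∈ S) : flipAcross D S (p i) (p j) := by
    have hagree : ∀ a b, a ≤ k → b ≤ k → (flipAcross D S (p a) (p b) ↔ D (p a) (p b)) :=
      fun a b ha hb => flipAcross_iff_of_iff ((hside a ha).trans (hside b hb).symm)
    rw [hagree i j (by omega) hjk]
    exact hD.2 k p (fun a ha => (hagree a (a + 1) (by omega) ha).mp (hp a ha))
      ((hagree 0 k (by omega) le_rfl).mp hpk) i j hij hjk
  by_cases h0 : p 0 ∈ S
  · exact same_side fun a ha =>
      iff_of_true (mem_of_path_flipAcross hS hp (Nat.zero_le a) ha h0) h0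
  by_cases hk : p k ∈ S
  swap
  · exact same_side fun a ha =>
      iff_of_false (fun h => hk (mem_of_path_flipAcross hS hp ha le_rfl h)) h0
  classical
  have hex : ∃ n, p n ∈ S := ⟨k, hk⟩
  set n := Nat.find hex
  have hnk : n ≤ k := Nat.find_min' hex hk
  have hmem : ∀ a ≤ k, p a ∈ S ↔ n ≤ a :=
    fun a ha => ⟨Nat.find_min' hex, fun h => mem_of_path_flipAcross hS hp h ha (Nat.find_spec hex)⟩
  have hn : 0 < n := Nat.pos_of_ne_zero fun h => h0 (h ▸ Nat.find_spec hex)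
  have hback : D (p n) (p (n - 1)) := by
    have h := hp (n - 1) (by omega)
    rw [Nat.sub_add_cancel hn] at h
    refine (flipAcross_iff_of_not_iff ?_).mp h
    rw [hmem _ (by omega), hmem _ hnk]; omega
  have hpath : ∀ a < k, a + 1 ≠ n → D (p a) (p (a + 1)) := fun a ha han =>
    (flipAcross_iff_of_iff (by rw [hmem _ (by omega), hmem _ ha]; omega)).mp (hp a ha)
  have hwrap : D (p k) (p 0) := (flipAcross_iff_of_not_iff (by tauto)).mp hpk
  have hrot := hD.rotate hn hnk hpath hback hwrap hij hjk
  have hside : (p i ∈ S ↔ p j ∈ S) ↔ (i < n ↔ j < n) := by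
    rw [hmem i (by omega), hmem j hjk]; omega
  by_cases h : i < n ↔ j < n
  · exact (flipAcross_iff_of_iff (hside.mpr h)).mpr (by simpa only [if_pos h] using hrot)
  · exact (flipAcross_iff_of_not_iff (mt hside.mp h)).mpr (by simpa only [if_neg h] using hrot)

end flipAcross

theorem exists_source_of_isSemiTransitive {G : SimpleGraph V} {D : V → V → Prop}
    (hG : IsOrientation G D) (hD : IsSemiTransitive D) (v : V) :
    ∃ D', IsOrientation G D' ∧ IsSemiTransitive D' ∧ ∀ u, G.Adj v u → D' v u := by
  set S := {x | TransGen D x v}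
  have hS : ∀ x y, D x y → y ∈ S → x ∈ S := fun x y hxy hy => TransGen.head hxy hy
  refine ⟨flipAcross D S, isOrientation_flipAcross hG, isSemiTransitive_flipAcross hS hD,
    fun u hvu => ?_⟩
  have hv : v ∉ S := hD.1 v
  by_cases h : D v u
  · have hu : u ∉ S := fun hu => hv (hS v u h hu)
    exact (flipAcross_iff_of_iff (iff_of_false hv hu)).mpr h
  · have hu : u ∈ S := .single ((hG.2 u v hvu.symm).mpr h)
    exact (flipAcross_iff_of_not_iff (by tauto)).mpr ((hG.2 u v hvu.symm).mpr h)

section Word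

variable [DecidableEq V] {w l : List V} {a x y : V}

/-- `x` and `y` alternate in `w`, starting with `x`. -/
def AlternatesFrom (w : List V) (x y : V) : Prop :=
  ∀ n, (w.take n).count y ≤ (w.take n).count x ∧ (w.take n).count x ≤ (w.take n).count y + 1

theorem alternatesFrom_nil : AlternatesFrom [] x y := by
  simp [AlternatesFrom]

theorem alternatesFrom_cons_of_ne (hx : a ≠ x) (hy : a ≠ y) :
    AlternatesFrom (a :: l) x y ↔ AlternatesFrom l x y := by
  rw [AlternatesFrom, ← Nat.and_forall_add_one]
  simp [AlternatesFrom, hx, hy]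

theorem alternatesFrom_cons_self (hxy : x ≠ y) :
    AlternatesFrom (x :: l) x y ↔ AlternatesFrom l y x := by
  rw [AlternatesFrom, ← Nat.and_forall_add_one]
  simp only [AlternatesFrom, List.take_succ_cons, List.take_zero, List.count_cons,
    List.count_nil, beq_self_eq_true, beq_iff_eq, hxy, if_true, if_false]
  exact (and_iff_right (by omega)).trans (forall_congr' fun n => by omega)

theorem not_alternatesFrom_cons (hxy : x ≠ y) : ¬ AlternatesFrom (y :: l) x y := fun h => by
  simpa [hxy] using (h 1).1

theorem alternatesFrom_iff_isChain_filter {p : V → Bool} (w : List V) (hxy : x ≠ y)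
    (hp : ∀ z, p z ↔ z = x ∨ z = y) :
    AlternatesFrom w x y ↔ (w.filter p).IsChain (· ≠ ·) ∧ ∀ b ∈ (w.filter p).head?, b = x := by
  induction w generalizing x y with
  | nil => simp [alternatesFrom_nil]
  | cons a l ih =>
    by_cases hpa : p a
    · have hhead : ∀ b ∈ (l.filter p).head?, b = x ∨ b = y := fun b hb =>
        (hp b).mp (List.of_mem_filter (List.mem_of_mem_head? hb))
      rw [List.filter_cons_of_pos hpa, List.isChain_cons]
      rcases (hp a).mp hpa with rfl | rfl
      · rw [alternatesFrom_cons_self hxy, ih hxy.symm fun z => (hp z).trans or_comm]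
        simp only [List.head?_cons, Option.mem_def, Option.some.injEq, forall_eq', and_true]
        refine and_comm.trans (and_congr_left' (forall₂_congr fun b hb => ?_))
        rcases hhead b hb with rfl | rfl <;> simp [hxy]
      · simpa [hxy.symm] using not_alternatesFrom_cons hxy
    · have hax : a ≠ x := fun h => hpa ((hp a).mpr (.inl h))
      have hay : a ≠ y := fun h => hpa ((hp a).mpr (.inr h))
      rw [List.filter_cons_of_neg hpa, alternatesFrom_cons_of_ne hax hay, ih hxy hp]

theorem alternate_iff_alternatesFrom (hxy : x ≠ y) :
    Alternate w x y ↔ AlternatesFrom w x y ∨ AlternatesFrom w y x := by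
  have hp : ∀ z, decide (z = x ∨ z = y) ↔ z = x ∨ z = y := by simp
  rw [alternatesFrom_iff_isChain_filter w hxy hp,
    alternatesFrom_iff_isChain_filter w hxy.symm fun z => (hp z).trans or_comm, Alternate]
  refine (and_or_left.symm.trans (and_iff_left_of_imp fun _ => ?_)).symm
  rcases hhead : (w.filter fun z => decide (z = x ∨ z = y)).head? with _ | b
  · simp
  · have hb : b ∈ w.filter fun z => decide (z = x ∨ z = y) := List.mem_of_mem_head? hhead
    simpa using List.of_mem_filter hb

theorem eq_of_forall_count_take_eq (hx : x ∈ w)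
    (h : ∀ n, (w.take n).count x = (w.take n).count y) : x = y := by
  induction w with
  | nil => simp at hx
  | cons a l ih =>
    have h1 := h 1
    simp only [List.take_succ_cons, List.take_zero, List.count_singleton] at h1
    by_cases hax : a = x
    · subst hax; simpa using h1
    · have hay : a ≠ y := by simpa [hax] using h1
      refine ih (List.mem_of_ne_of_mem (Ne.symm hax) hx) fun n => ?_
      simpa [List.count_cons, hax, hay] using h (n + 1)

def wordOrientation (G : SimpleGraph V) (w : List V) (x y : V) : Prop :=
  G.Adj x y ∧ AlternatesFrom w x y

variable {G : SimpleGraph V}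

theorem count_take_le_of_reflTransGen (h : ReflTransGen (wordOrientation G w) x y) (n : ℕ) :
    (w.take n).count y ≤ (w.take n).count x := by
  induction h with
  | refl => rfl
  | tail _ h ih => exact ((h.2 n).1).trans ih

theorem acyclic_wordOrientation (hw : ∀ v, v ∈ w) (x : V) :
    ¬ TransGen (wordOrientation G w) x x := fun h => by
  obtain ⟨y, hxy, hyx⟩ := TransGen.head'_iff.mp h
  refine hxy.1.ne (eq_of_forall_count_take_eq (hw x) fun n => ?_)
  exact le_antisymm (count_take_le_of_reflTransGen hyx n) (hxy.2 n).1

theorem Represents.isOrientation (hw : Represents w G) :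
    IsOrientation G (wordOrientation G w) := by
  refine ⟨fun _ _ h => h.1, fun x y hxy => ⟨fun h h' => ?_, fun h => ⟨hxy, ?_⟩⟩⟩
  · exact hxy.ne <|
      eq_of_forall_count_take_eq (hw.1 x) fun n => le_antisymm (h'.2 n).1 (h.2 n).1
  · exact ((alternate_iff_alternatesFrom hxy.ne).mp ((hw.2 x y hxy.ne).mpr hxy)).resolve_right
      fun h' => h ⟨hxy.symm, h'⟩

theorem Represents.isSemiTransitive (hw : Represents w G) :
    IsSemiTransitive (wordOrientation G w) := by
  refine ⟨acyclic_wordOrientation hw.1, fun k p hp hpk i j hij hjk => ?_⟩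
  have hle : ∀ a b, a ≤ b → b ≤ k → ∀ n, (w.take n).count (p b) ≤ (w.take n).count (p a) :=
    fun a b hab hbk => count_take_le_of_reflTransGen (reflTransGen_of_path hp hab hbk)
  have hne : p i ≠ p j := fun h => by
    have := transGen_of_path hp hij hjk
    rw [h] at this
    exact acyclic_wordOrientation hw.1 _ this
  -- prefix counts decrease along the path, and those of its endpoints differ by at most one
  have halt : AlternatesFrom w (p i) (p j) := fun n =>
    ⟨hle i j hij.le hjk n, by
      have := hle 0 i (by omega) (by omega) n
      have := hle j k hjk le_rfl n
      have := (hpk.2 n).2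
      omega⟩
  exact ⟨(hw.2 _ _ hne).mp ((alternate_iff_alternatesFrom hne).mpr (.inl halt)), halt⟩

end Word

end

/-- If `G` is word-representable then for every vertex `v` there is a
semi-transitive orientation of `G` with `v` as a source. -/
theorem stmt13 {V : Type*} [DecidableEq V] (G : SimpleGraph V)
    (h : WordRepresentable G) (v : V) :
    ∃ D, IsOrientation G D ∧ IsSemiTransitive D ∧ ∀ u, G.Adj v u → D v u := by
  obtain ⟨w, hw⟩ := h
  exact exists_source_of_isSemiTransitive hw.isOrientation hw.isSemiTransitive v
end

section
/- In any semi-transitive orientation of G_n^9 (n ≥ 2) in which d is a source and the edge between a and b is oriented a → b and the edges among a,b,c are oriented a → c and b → c, every vertex i with 2 ≤ i ≤ n−1 has its edges to a and b oriented i → a and i → b. -/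
/-- The graph `G_n^9` on vertices `1,…,n` (`Sum.inl`, 0-based) and
`a = inr 0`, `b = inr 1`, `c = inr 2`, `d = inr 3`:
the level-2 vertices `a,1,…,n,b` induce the complement of the path
`a-1-2-⋯-n-b`; `c` is adjacent exactly to `a` and `b`; `d` is adjacent to
`a`, `b` and all of `1,…,n` (but not to `c`). -/
def G9 (n : ℕ) : SimpleGraph (Fin n ⊕ Fin 4) :=
  SimpleGraph.fromRel (fun u v =>
    match u, v with
    | Sum.inl i, Sum.inl j => (i : ℕ) + 1 < (j : ℕ) ∨ (j : ℕ) + 1 < (i : ℕ)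
    | Sum.inl i, Sum.inr k =>
        (k = 0 ∧ 1 ≤ (i : ℕ)) ∨ (k = 1 ∧ (i : ℕ) + 1 < n) ∨ k = 3
    | Sum.inr _, Sum.inl _ => False
    | Sum.inr k, Sum.inr l =>
        (k = 0 ∧ (l = 1 ∨ l = 2 ∨ l = 3)) ∨ (k = 1 ∧ (l = 2 ∨ l = 3)))


private lemma semitrans_path4 {V : Type*} {D : V → V → Prop} (hst : IsSemiTransitive D)
    {v0 v1 v2 v3 : V} (h01 : D v0 v1) (h12 : D v1 v2) (h23 : D v2 v3)
    (h03 : D v0 v3) : D v1 v3 := by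
  have h := hst.2 3
      (fun m => if m = 0 then v0 else if m = 1 then v1 else if m = 2 then v2 else v3)
      (by intro i hi; interval_cases i <;> simpa) (by simpa) 1 3 (by omega) le_rfl
  simpa using h

/-- In any semi-transitive orientation of `G_n^9` (`n ≥ 2`) in which `d` is a
source and the edges among `a, b, c` are oriented `a → b`, `a → c`, `b → c`,
every vertex `i` with `2 ≤ i ≤ n − 1` (1-based; 0-based `Sum.inl i` with
`1 ≤ i ≤ n − 2`) has its edges to `a` and `b` oriented `i → a` and `i → b`. -/
theorem stmt15 (n : ℕ) (hn : 2 ≤ n) (D : (Fin n ⊕ Fin 4) → (Fin n ⊕ Fin 4) → Prop)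
    (hor : IsOrientation (G9 n) D) (hst : IsSemiTransitive D)
    (hsrc : ∀ u, (G9 n).Adj (Sum.inr 3) u → D (Sum.inr 3) u)
    (hab : D (Sum.inr 0) (Sum.inr 1))
    (hac : D (Sum.inr 0) (Sum.inr 2))
    (hbc : D (Sum.inr 1) (Sum.inr 2)) :
    ∀ i : Fin n, 1 ≤ (i : ℕ) → (i : ℕ) ≤ n - 2 →
      D (Sum.inl i) (Sum.inr 0) ∧ D (Sum.inl i) (Sum.inr 1) := by
  obtain ⟨hDadj, hI⟩ := hor
  -- adjacency facts
  have adj_d_i : ∀ i : Fin n, (G9 n).Adj (Sum.inr 3) (Sum.inl i) := by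
    intro i; simp [G9, SimpleGraph.fromRel_adj]
  have adj_d_a : (G9 n).Adj (Sum.inr 3) (Sum.inr 0) := by
    simp [G9, SimpleGraph.fromRel_adj]
  have adj_a_i : ∀ i : Fin n, 1 ≤ (i:ℕ) → (G9 n).Adj (Sum.inr 0) (Sum.inl i) := by
    intro i h; simp [G9, SimpleGraph.fromRel_adj]; omega
  have adj_b_i : ∀ i : Fin n, (i:ℕ)+1 < n → (G9 n).Adj (Sum.inr 1) (Sum.inl i) := by
    intro i h; simp [G9, SimpleGraph.fromRel_adj]; omega
  have nadj_i_c : ∀ i : Fin n, ¬ (G9 n).Adj (Sum.inl i) (Sum.inr 2) := by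
    intro i h; simp [G9, SimpleGraph.fromRel_adj] at h
  have nadj_succ : ∀ i j : Fin n, (j:ℕ)+1 = (i:ℕ) → ¬ (G9 n).Adj (Sum.inl j) (Sum.inl i) := by
    intro i j hj h; simp [G9, SimpleGraph.fromRel_adj] at h; omega
  have nadj_a_0 : ∀ i : Fin n, (i:ℕ) = 0 → ¬ (G9 n).Adj (Sum.inr 0) (Sum.inl i) := by
    intro i hi h; simp [G9, SimpleGraph.fromRel_adj] at h; omega
  -- Lemma B : 0 → b
  have hB : ∀ j : Fin n, (j:ℕ) = 0 → D (Sum.inl j) (Sum.inr 1) := by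
    intro j hj
    have hadj := adj_b_i j (by omega)
    by_contra h
    have hbj : D (Sum.inr 1) (Sum.inl j) := (hI _ _ hadj).mpr h
    have := semitrans_path4 hst (hsrc _ adj_d_a) hab hbj (hsrc _ (adj_d_i j))
    exact nadj_a_0 j hj (hDadj _ _ this)
  -- step lemma
  have step : ∀ j i : Fin n, (i:ℕ) = (j:ℕ) + 1 → (i:ℕ) ≤ n - 2 →
      D (Sum.inl j) (Sum.inr 1) →
      D (Sum.inl i) (Sum.inr 0) ∧ D (Sum.inl i) (Sum.inr 1) := by
    intro j i hij hile hjb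
    have hadja := adj_a_i i (by omega)
    have hadjb := adj_b_i i (by omega)
    have hia : D (Sum.inl i) (Sum.inr 0) := by
      by_contra h
      have hai : D (Sum.inr 0) (Sum.inl i) := (hI _ _ hadja).mpr h
      have hbi : D (Sum.inr 1) (Sum.inl i) := by
        by_contra h'
        have hib : D (Sum.inl i) (Sum.inr 1) := (hI _ _ hadjb.symm).mpr h'
        have := semitrans_path4 hst hai hib hbc hac
        exact nadj_i_c i (hDadj _ _ this)
      have := semitrans_path4 hst (hsrc _ (adj_d_i j)) hjb hbi (hsrc _ (adj_d_i i))
      exact nadj_succ i j (by omega) (hDadj _ _ this)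
    refine ⟨hia, ?_⟩
    by_contra h
    have hbi : D (Sum.inr 1) (Sum.inl i) := (hI _ _ hadjb).mpr h
    have := semitrans_path4 hst hbi hia hac hbc
    exact nadj_i_c i (hDadj _ _ this)
  -- main induction
  have main : ∀ m : ℕ, ∀ i : Fin n, (i:ℕ) = m + 1 → (i:ℕ) ≤ n - 2 →
      D (Sum.inl i) (Sum.inr 0) ∧ D (Sum.inl i) (Sum.inr 1) := by
    intro m
    induction m with
    | zero =>
      intro i hi hile
      have hjlt : 0 < n := by omega
      exact step ⟨0, hjlt⟩ i (by simpa using hi) hile (hB ⟨0, hjlt⟩ rfl)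
    | succ m ih =>
      intro i hi hile
      have hjlt : m + 1 < n := by omega
      have hj := ih ⟨m+1, hjlt⟩ rfl (by simp; omega)
      exact step ⟨m+1, hjlt⟩ i (by simpa using hi) hile hj.2
  intro i h1 h2
  obtain ⟨m, hm⟩ : ∃ m, (i:ℕ) = m + 1 := ⟨(i:ℕ) - 1, by omega⟩
  exact main m i hm h2
end

section
/- Consider the suborientation of G_n^4 restricted to vertices {1,...,2n+1} (denoted G''), with vertex 1 as a source. If the edge {2,3} is oriented 2 → 3, then in any semi-transitive orientation every even vertex i with 4 ≤ i ≤ 2n−2 must have its edges oriented i → (i+1) and i → (i−1). -/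
/-- The graph `G''` on `{1,…,2n+1}` (0-based `Fin (2n+1)`): vertices `1`
(index 0) and `2n+1` (index `2n`) are adjacent to each other and to all other
vertices, and among `2,…,2n` the only edges are the path edges `{i,i+1}`. -/
def Gpp (n : ℕ) : SimpleGraph (Fin (2 * n + 1)) :=
  SimpleGraph.fromRel (fun i j =>
    (i : ℕ) = 0 ∨ (i : ℕ) = 2 * n ∨ (j : ℕ) = (i : ℕ) + 1)

/-- In any semi-transitive orientation of `G''` with vertex `1` as a source in
which the edge `{2,3}` is oriented `2 → 3`, every even vertex `m` with
`4 ≤ m ≤ 2n − 2` (1-based) has its edges oriented `m → m+1` and `m → m−1`. -/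
theorem stmt17 (n : ℕ) (hn : 3 ≤ n)
    (D : Fin (2 * n + 1) → Fin (2 * n + 1) → Prop)
    (hor : IsOrientation (Gpp n) D) (hst : IsSemiTransitive D)
    (hsrc : ∀ u, (Gpp n).Adj ⟨0, by omega⟩ u → D ⟨0, by omega⟩ u)
    (h23 : D ⟨1, by omega⟩ ⟨2, by omega⟩) :
    ∀ (m : ℕ) (_h4 : 4 ≤ m) (_hle : m ≤ 2 * n - 2) (_he : Even m),
      D ⟨m - 1, by omega⟩ ⟨m, by omega⟩ ∧ D ⟨m - 1, by omega⟩ ⟨m - 2, by omega⟩ := by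
  obtain ⟨hD, hE⟩ := hor
  obtain ⟨hacyc, hpath⟩ := hst
  have hN : 0 < 2 * n + 1 := by omega
  set v : ℕ → Fin (2 * n + 1) := fun i => ⟨i % (2 * n + 1), Nat.mod_lt _ hN⟩ with hv
  have vv : ∀ i, i < 2 * n + 1 → ((v i : Fin (2 * n + 1)) : ℕ) = i := by
    intro i hi; simp [hv, Nat.mod_eq_of_lt hi]
  have vmk : ∀ (x : ℕ) (h : x < 2 * n + 1), (⟨x, h⟩ : Fin (2 * n + 1)) = v x := by
    intro x h; apply Fin.ext; rw [vv x h]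
  have adj_iff : ∀ a b : Fin (2 * n + 1), (Gpp n).Adj a b ↔
      (a : ℕ) ≠ (b : ℕ) ∧ ((a : ℕ) = 0 ∨ (a : ℕ) = 2 * n ∨ (b : ℕ) = (a : ℕ) + 1 ∨
        (b : ℕ) = 0 ∨ (b : ℕ) = 2 * n ∨ (a : ℕ) = (b : ℕ) + 1) := by
    intro a b
    simp only [Gpp, SimpleGraph.fromRel_adj, ne_eq, Fin.ext_iff]
    tauto
  have adj_consec : ∀ x, x + 1 ≤ 2 * n → (Gpp n).Adj (v x) (v (x + 1)) := by
    intro x hx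
    rw [adj_iff, vv x (by omega), vv (x + 1) (by omega)]
    omega
  have nadj2 : ∀ x, 1 ≤ x → x + 2 < 2 * n → ¬ (Gpp n).Adj (v x) (v (x + 2)) := by
    intro x h1 h2 hadj
    rw [adj_iff, vv x (by omega), vv (x + 2) (by omega)] at hadj
    omega
  have hz : ∀ i, 1 ≤ i → i ≤ 2 * n → D (v 0) (v i) := by
    intro i h1 h2
    have hadj : (Gpp n).Adj (v 0) (v i) := by
      rw [adj_iff, vv 0 (by omega), vv i (by omega)]
      omega
    have e0 : (⟨0, by omega⟩ : Fin (2 * n + 1)) = v 0 := vmk 0 (by omega)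
    rw [← e0] at hadj
    have h := hsrc (v i) hadj
    rwa [e0] at h
  have flip : ∀ a b, (Gpp n).Adj a b → ¬ D b a → D a b := by
    intro a b hadj h
    exact (hE a b hadj).2 h
  have short : ∀ a b c d : Fin (2 * n + 1), D a b → D b c → D c d → D a d → D b d := by
    intro a b c d hab hbc hcd had
    have h := hpath 3 (fun i => if i = 0 then a else if i = 1 then b else if i = 2 then c else d)
      (by intro i hi; interval_cases i <;> simpa) (by simpa) 1 3 (by omega) le_rfl
    simpa using h
  have back : ∀ x, 1 ≤ x → x + 2 < 2 * n → D (v x) (v (x + 1)) → D (v (x + 2)) (v (x + 1)) := by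
    intro x h1 h2 hx
    apply flip _ _ ((adj_consec (x + 1) (by omega)).symm)
    intro hcon
    exact nadj2 x h1 h2
      (hD _ _ (short (v 0) (v x) (v (x + 1)) (v (x + 2)) (hz x h1 (by omega)) hx hcon
        (hz (x + 2) (by omega) (by omega))))
  have fwd : ∀ x, 1 ≤ x → x + 3 < 2 * n → D (v (x + 2)) (v (x + 1)) → D (v (x + 2)) (v (x + 3)) := by
    intro x h1 h2 hx
    apply flip _ _ (adj_consec (x + 2) (by omega))
    intro hcon
    have hsc : D (v (x + 3)) (v (x + 1)) :=
      short (v 0) (v (x + 3)) (v (x + 2)) (v (x + 1)) (hz (x + 3) (by omega) (by omega)) hcon hx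
        (hz (x + 1) (by omega) (by omega))
    exact nadj2 (x + 1) (by omega) (by omega) ((hD _ _ hsc).symm)
  have h12 : D (v 1) (v 2) := by
    rw [← vmk 1 (by omega), ← vmk 2 (by omega)]
    exact h23
  have main : ∀ k, 2 * k + 2 < 2 * n → D (v (2 * k + 1)) (v (2 * k + 2)) := by
    intro k
    induction k with
    | zero => intro _; simpa using h12
    | succ k ih =>
      intro hk
      have hk' := ih (by omega)
      have hb := back (2 * k + 1) (by omega) (by omega) hk'
      have hf := fwd (2 * k + 1) (by omega) (by omega) hb
      have e1 : 2 * (k + 1) + 1 = 2 * k + 1 + 2 := by ring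
      have e2 : 2 * (k + 1) + 2 = 2 * k + 1 + 3 := by ring
      rw [e1, e2]
      exact hf
  intro m h4 hle he
  obtain ⟨k, hk⟩ := he
  have hk2 : 2 ≤ k := by omega
  have hm : m = 2 * k := by omega
  rw [vmk (m - 1) (by omega), vmk m (by omega), vmk (m - 2) (by omega)]
  constructor
  · have h := main (k - 1) (by omega)
    have e1 : 2 * (k - 1) + 1 = m - 1 := by omega
    have e2 : 2 * (k - 1) + 2 = m := by omega
    rwa [e1, e2] at h
  · have h := main (k - 2) (by omega)
    have hb := back (2 * (k - 2) + 1) (by omega) (by omega) h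
    have e1 : 2 * (k - 2) + 1 + 2 = m - 1 := by omega
    have e2 : 2 * (k - 2) + 1 + 1 = m - 2 := by omega
    rwa [e1, e2] at hb
end
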